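/- arXiv:1910.09949 — 2 statements merged into one kernel-verified Lean document; each statement's English description precedes it below -/
import Mathlib

section
/- Let (X^i)_{i≥0} be i.i.d. nonnegative real random variables, let R > 0, d > 0 and t ≥ d, set n̂ = ⌈R(t-d)⌉, and define D(n̂) = max_{0 ≤ v ≤ n̂} ( (n̂ - v)/R + Σ_{i=0}^{v} X^{n̂ - i} ). Suppose s > 0 is such that M(s) = E[e^{s X^0}] is finite and M(s) < e^{s/R}, and set β(s) = M(s) e^{-s/R}. Then P( D(n̂) > t ) ≤ e^{-s(d - 1/R)} · M(s) / (1 - β(s)). -/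
open MeasureTheory ProbabilityTheory

/-- Reich's (max-plus) equation: departure time of packet `n` from an FCFS queue with
arrival process `A` and service times `X`. -/
noncomputable def depart {Ω : Type*} (A : ℕ → Ω → ℝ) (X : ℕ → Ω → ℝ) (n : ℕ) (ω : Ω) : ℝ :=
  (Finset.range (n + 1)).sup' ⟨0, Finset.mem_range.mpr (Nat.succ_pos n)⟩
    (fun v => A (n - v) ω + ∑ i ∈ Finset.range (v + 1), X (n - i) ω)

/-!
By Reich's equation, `D(n̂) > t` forces one of the `n̂ + 1` window sums `X^{n̂-v} + ⋯ + X^{n̂}`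
to exceed `t - (n̂ - v)/R`. By independence the window has moment generating function
`M(s)^{v+1}`, so the Chernoff bound together with `n̂ < R(t - d) + 1` bounds the probability of the
`v`-th event by `e^{-s(d-1/R)} M(s) β(s)^v`. The union bound and the geometric series give `Ψ₁`.
-/

open Finset

section Queue

variable {Ω : Type*}

theorem lt_depart_iff (A X : ℕ → Ω → ℝ) (n : ℕ) (ω : Ω) (t : ℝ) :
    t < depart A X n ω ↔
      ∃ v ∈ range (n + 1), t < A (n - v) ω + ∑ i ∈ range (v + 1), X (n - i) ω :=
  lt_sup'_iff _

theorem measure_lt_depart_le [MeasurableSpace Ω] (μ : Measure Ω) (A X : ℕ → Ω → ℝ) (n : ℕ)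
    (t : ℝ) :
    μ {ω | t < depart A X n ω} ≤
      ∑ v ∈ range (n + 1), μ {ω | t < A (n - v) ω + ∑ i ∈ range (v + 1), X (n - i) ω} :=
  (measure_mono fun ω hω => by simpa using (lt_depart_iff A X n ω t).1 hω).trans
    (measure_biUnion_finset_le _ _)

end Queue

section Chernoff

variable {Ω ι : Type*} [MeasurableSpace Ω] {μ : Measure Ω} {Y : Ω → ℝ} {s : ℝ}

theorem ProbabilityTheory.iIndepFun.measure_sum_ge_le_exp_mul_mgf_pow {X : ι → Ω → ℝ}
    (hindep : iIndepFun X μ) (hmeas : ∀ i, Measurable (X i))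
    (hident : ∀ i, IdentDistrib (X i) Y μ μ) (hs : 0 ≤ s)
    (hint : Integrable (fun ω => Real.exp (s * Y ω)) μ) (F : Finset ι) (ε : ℝ) :
    μ.real {ω | ε ≤ ∑ i ∈ F, X i ω} ≤ Real.exp (-s * ε) * mgf Y μ s ^ #F := by
  have := hindep.isProbabilityMeasure
  have hintX : ∀ i ∈ F, Integrable (fun ω => Real.exp (s * X i ω)) μ := fun i _ =>
    ((hident i).comp (measurable_const_mul s).exp).integrable_iff.2 hint
  have hmgf : mgf (∑ i ∈ F, X i) μ s = mgf Y μ s ^ #F := by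
    rw [hindep.mgf_sum hmeas]
    exact prod_eq_pow_card fun i _ => mgf_congr_of_identDistrib _ _ (hident i) s
  simpa [Finset.sum_apply, hmgf] using
    measure_ge_le_exp_mul_mgf ε hs (hindep.integrable_exp_mul_sum hmeas hintX)

theorem ProbabilityTheory.iIndepFun.measure_sum_range_sub_ge_le_exp_mul_mgf_pow
    {X : ℕ → Ω → ℝ} (hindep : iIndepFun X μ) (hmeas : ∀ i, Measurable (X i))
    (hident : ∀ i, IdentDistrib (X i) Y μ μ) (hs : 0 ≤ s)
    (hint : Integrable (fun ω => Real.exp (s * Y ω)) μ) {n v : ℕ} (hv : v ≤ n) (ε : ℝ) :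
    μ.real {ω | ε ≤ ∑ i ∈ range (v + 1), X (n - i) ω} ≤
      Real.exp (-s * ε) * mgf Y μ s ^ (v + 1) := by
  have hinj : Set.InjOn (n - ·) (range (v + 1)) := fun a ha b hb hab => by
    simp only [coe_range, Set.mem_Iio] at ha hb
    simp only at hab
    omega
  have h := hindep.measure_sum_ge_le_exp_mul_mgf_pow hmeas hident hs hint
    ((range (v + 1)).image (n - ·)) ε
  simpa only [card_image_of_injOn hinj, card_range, sum_image hinj] using h

theorem measure_lt_depart_le_sum_exp {X : ℕ → Ω → ℝ} (hindep : iIndepFun X μ)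
    (hmeas : ∀ i, Measurable (X i)) (hident : ∀ i, IdentDistrib (X i) Y μ μ) (hs : 0 ≤ s)
    (hint : Integrable (fun ω => Real.exp (s * Y ω)) μ) (a : ℕ → ℝ) (n : ℕ) (t : ℝ) :
    μ {ω | t < depart (fun k _ => a k) X n ω} ≤
      ∑ v ∈ range (n + 1),
        ENNReal.ofReal (Real.exp (-s * (t - a (n - v))) * mgf Y μ s ^ (v + 1)) := by
  have := hindep.isProbabilityMeasure
  refine (measure_lt_depart_le μ _ X n t).trans (sum_le_sum fun v hv => ?_)
  calc μ {ω | t < a (n - v) + ∑ i ∈ range (v + 1), X (n - i) ω}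
      ≤ μ {ω | t - a (n - v) ≤ ∑ i ∈ range (v + 1), X (n - i) ω} :=
        measure_mono fun ω (hω : t < _) => show t - a (n - v) ≤ _ by linarith
    _ = ENNReal.ofReal (μ.real {ω | t - a (n - v) ≤ ∑ i ∈ range (v + 1), X (n - i) ω}) :=
        (ofReal_measureReal).symm
    _ ≤ _ := ENNReal.ofReal_le_ofReal <| hindep.measure_sum_range_sub_ge_le_exp_mul_mgf_pow hmeas
        hident hs hint (Nat.lt_succ_iff.mp (mem_range.mp hv)) _

end Chernoff

theorem exp_mul_pow_le_of_le_natCeil {R d t s M : ℝ} (hR : 0 < R) (ht : d ≤ t) (hs : 0 ≤ s)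
    (hM : 0 ≤ M) {v : ℕ} (hv : v ≤ ⌈R * (t - d)⌉₊) :
    Real.exp (-s * (t - ((⌈R * (t - d)⌉₊ - v : ℕ) : ℝ) / R)) * M ^ (v + 1) ≤
      Real.exp (-s * (d - 1 / R)) * M * (M * Real.exp (-(s / R))) ^ v := by
  have hceil : (⌈R * (t - d)⌉₊ : ℝ) < R * (t - d) + 1 :=
    Nat.ceil_lt_add_one (mul_nonneg hR.le (sub_nonneg.mpr ht))
  have hslack : d - 1 / R + v / R ≤ t - ((⌈R * (t - d)⌉₊ - v : ℕ) : ℝ) / R := by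
    have hn : (⌈R * (t - d)⌉₊ : ℝ) / R < t - d + 1 / R := by
      rw [div_lt_iff₀ hR, add_mul, one_div_mul_cancel hR.ne']
      linarith
    rw [Nat.cast_sub hv, sub_div]
    linarith
  have hexp : Real.exp (-s * (t - ((⌈R * (t - d)⌉₊ - v : ℕ) : ℝ) / R)) ≤
      Real.exp (-s * (d - 1 / R)) * Real.exp (-(s / R)) ^ v := by
    rw [← Real.exp_nat_mul, ← Real.exp_add, Real.exp_le_exp]
    linear_combination mul_le_mul_of_nonneg_left hslack hs
  calc _ ≤ Real.exp (-s * (d - 1 / R)) * Real.exp (-(s / R)) ^ v * M ^ (v + 1) := by gcongr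
    _ = _ := by ring

theorem stmt7_general {Ω : Type*} [MeasurableSpace Ω] (μ : Measure Ω) [IsProbabilityMeasure μ]
    (X : ℕ → Ω → ℝ) (hmeas : ∀ i, Measurable (X i))
    (hindep : iIndepFun X μ)
    (hident : ∀ i, μ.map (X i) = μ.map (X 0))
    (R d t s : ℝ) (hR : 0 < R) (ht : d ≤ t) (hs : 0 < s)
    (hint : Integrable (fun ω => Real.exp (s * X 0 ω)) μ)
    (hlt : (∫ ω, Real.exp (s * X 0 ω) ∂μ) < Real.exp (s / R)) :
    μ {ω | t < depart (fun n _ => (n : ℝ) / R) X ⌈R * (t - d)⌉₊ ω} ≤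
      ENNReal.ofReal (Real.exp (-s * (d - 1 / R)) * (∫ ω, Real.exp (s * X 0 ω) ∂μ) /
        (1 - (∫ ω, Real.exp (s * X 0 ω) ∂μ) * Real.exp (-(s / R)))) := by
  set n := ⌈R * (t - d)⌉₊
  set M := ∫ ω, Real.exp (s * X 0 ω) ∂μ
  set C := Real.exp (-s * (d - 1 / R))
  set β := M * Real.exp (-(s / R))
  have hM : 0 < M := mgf_pos hint
  have hβ : β < 1 := by
    simpa [β, ← Real.exp_add] using mul_lt_mul_of_pos_right hlt (Real.exp_pos (-(s / R)))
  have hid : ∀ i, IdentDistrib (X i) (X 0) μ μ := fun i =>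
    ⟨(hmeas i).aemeasurable, (hmeas 0).aemeasurable, hident i⟩
  calc μ {ω | t < depart (fun k _ => (k : ℝ) / R) X n ω}
      ≤ ∑ v ∈ range (n + 1),
          ENNReal.ofReal (Real.exp (-s * (t - ((n - v : ℕ) : ℝ) / R)) * M ^ (v + 1)) :=
        measure_lt_depart_le_sum_exp hindep hmeas hid hs.le hint (fun k => (k : ℝ) / R) n t
    _ ≤ ∑ v ∈ range (n + 1), ENNReal.ofReal (C * M * β ^ v) :=
        sum_le_sum fun v hv => ENNReal.ofReal_le_ofReal <|
          exp_mul_pow_le_of_le_natCeil hR ht hs.le hM.le (Nat.lt_succ_iff.mp (mem_range.mp hv))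
    _ = ENNReal.ofReal (C * M * ∑ v ∈ range (n + 1), β ^ v) := by
        rw [mul_sum, ENNReal.ofReal_sum_of_nonneg fun v _ => by positivity]
    _ ≤ ENNReal.ofReal (C * M / (1 - β)) := by
        rw [div_eq_mul_inv]
        gcongr
        simpa using geom_sum_Ico_le_of_lt_one (m := 0) (n := n + 1) (by positivity) hβ

/-- Chernoff upper bound `Ψ₁(s,d,R) = e^{-s(d-1/R)} M(s)/(1-β(s))` on the violation
probability of the departure instant of the tagged packet `n̂ = ⌈R(t-d)⌉` for a D/G/1 FCFS
queue with i.i.d. nonnegative service times, where `M(s) = E[e^{s X⁰}]` satisfies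
`M(s) < e^{s/R}` and `β(s) = M(s) e^{-s/R}`. -/
theorem stmt7 {Ω : Type*} [MeasurableSpace Ω] (μ : Measure Ω) [IsProbabilityMeasure μ]
    (X : ℕ → Ω → ℝ) (hmeas : ∀ i, Measurable (X i)) (hnn : ∀ i ω, 0 ≤ X i ω)
    (hindep : iIndepFun X μ)
    (hident : ∀ i, μ.map (X i) = μ.map (X 0))
    (R d t s : ℝ) (hR : 0 < R) (hd : 0 < d) (ht : d ≤ t) (hs : 0 < s)
    (hint : Integrable (fun ω => Real.exp (s * X 0 ω)) μ)
    (hlt : (∫ ω, Real.exp (s * X 0 ω) ∂μ) < Real.exp (s / R)) :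
    μ {ω | t < depart (fun n _ => (n : ℝ) / R) X ⌈R * (t - d)⌉₊ ω} ≤
      ENNReal.ofReal (Real.exp (-s * (d - 1 / R)) * (∫ ω, Real.exp (s * X 0 ω) ∂μ) /
        (1 - (∫ ω, Real.exp (s * X 0 ω) ∂μ) * Real.exp (-(s / R)))) :=
  stmt7_general μ X hmeas hindep hident R d t s hR ht hs hint hlt
end

section
/- Let s > 0, m1 > 0, m2 > 0 and d ∈ ℝ. The function T ↦ e^{-s d} · m1 m2 · e^{3 s T} / ( (e^{s T} - m1)(e^{s T} - m2) ), defined on the open interval ( (ln max(m1, m2))/s, ∞ ) (where e^{sT} > m1 and e^{sT} > m2), is convex. -/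
/-!
The function is log-convex: on the region `e^{sT} > m₁, m₂` it equals
`e^{-sd} m₁ m₂ · exp (sT - log (1 - m₁ e^{-sT}) - log (1 - m₂ e^{-sT}))`, and
`y ↦ -log (1 - y)` is convex and increasing on `y < 1` while `T ↦ m e^{-sT}` is convex,
so the exponent is convex; the exponential of a convex function is convex.
-/

open Real Set

section

variable {E : Type*} [AddCommGroup E] [Module ℝ E] {s : Set E} {f : E → ℝ}

theorem ConvexOn.exp (hf : ConvexOn ℝ s f) : ConvexOn ℝ s fun x => exp (f x) :=
  ⟨hf.1, fun _ hx _ hy _ _ ha hb hab =>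
    (exp_le_exp.2 (hf.2 hx hy ha hb hab)).trans (convexOn_exp.2 trivial trivial ha hb hab)⟩

theorem ConvexOn.neg_log_one_sub (hf : ConvexOn ℝ s f) (hf1 : ∀ x ∈ s, f x < 1) :
    ConvexOn ℝ s fun x => -log (1 - f x) := by
  refine ⟨hf.1, fun x hx y hy a b ha hb hab => ?_⟩
  have hx' : 0 < 1 - f x := sub_pos.2 (hf1 x hx)
  have hy' : 0 < 1 - f y := sub_pos.2 (hf1 y hy)
  have hmix : a * (1 - f x) + b * (1 - f y) = 1 - (a * f x + b * f y) := by
    linear_combination hab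
  have hconv : f (a • x + b • y) ≤ a * f x + b * f y := hf.2 hx hy ha hb hab
  have hconc := strictConcaveOn_log_Ioi.concaveOn.2 hx' hy' ha hb hab
  have hpos := convex_Ioi (0 : ℝ) hx' hy' ha hb hab
  simp only [smul_eq_mul, mem_Ioi, hmix] at hconc hpos ⊢
  have hmono : log (1 - (a * f x + b * f y)) ≤ log (1 - f (a • x + b • y)) :=
    log_le_log hpos (by linarith)
  linarith

end

theorem exp_neg_log_one_sub_mul_exp_neg {m x : ℝ} (hm : m < exp x) :
    exp (-log (1 - m * exp (-x))) = exp x / (exp x - m) := by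
  have hpos : 0 < exp x - m := sub_pos.2 hm
  have h1 : 1 - m * exp (-x) = (exp x - m) / exp x := by
    rw [exp_neg]; field_simp
  rw [exp_neg, h1, exp_log (div_pos hpos (exp_pos x)), inv_div]

theorem lt_exp_mul_of_log_div_lt {m s T : ℝ} (hm : 0 < m) (hs : 0 < s) (hT : log m / s < T) :
    m < exp (s * T) := by
  rw [← exp_log hm, exp_lt_exp]
  rwa [div_lt_iff₀ hs, mul_comm] at hT

theorem mul_exp_neg_lt_one {m x : ℝ} (hm : m < exp x) : m * exp (-x) < 1 := by
  rwa [exp_neg, mul_inv_lt_iff₀ (exp_pos x), one_mul]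

theorem convexOn_mul_exp_neg_mul {m : ℝ} (hm : 0 ≤ m) (s : ℝ) :
    ConvexOn ℝ univ fun T => m * exp (-(s * T)) := by
  simpa using (((LinearMap.mul ℝ ℝ (-s)).convexOn convex_univ).exp).smul hm

/-- The two-hop Chernoff upper bound, written in the inter-arrival time `T = 1/R` as
`Ψ₂(s,d,T) = e^{-sd} · m1 m2 · e^{3sT} / ((e^{sT} - m1)(e^{sT} - m2))` with `mk = Mk(s)`,
is convex in `T` on the region where `e^{sT} > m1` and `e^{sT} > m2`. -/
theorem stmt15 (s m1 m2 d : ℝ) (hs : 0 < s) (hm1 : 0 < m1) (hm2 : 0 < m2) :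
    ConvexOn ℝ (Set.Ioi (Real.log (max m1 m2) / s))
      (fun T => Real.exp (-s * d) * (m1 * m2) * Real.exp (3 * s * T) /
        ((Real.exp (s * T) - m1) * (Real.exp (s * T) - m2))) := by
  set S := Ioi (log (max m1 m2) / s)
  have hlt : ∀ m, 0 < m → m ≤ max m1 m2 → ∀ T ∈ S, m < exp (s * T) :=
    fun m hm hmax T hT => lt_exp_mul_of_log_div_lt hm hs <|
      lt_of_le_of_lt (div_le_div_of_nonneg_right (log_le_log hm hmax) hs.le) hT
  have hfactor : ∀ m, 0 < m → m ≤ max m1 m2 →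
      ConvexOn ℝ S fun T => -log (1 - m * exp (-(s * T))) := fun m hm hmax =>
    ((convexOn_mul_exp_neg_mul hm.le s).subset (subset_univ S) (convex_Ioi _)).neg_log_one_sub
      fun T hT => mul_exp_neg_lt_one (hlt m hm hmax T hT)
  have hlog : ConvexOn ℝ S fun T =>
      s * T + -log (1 - m1 * exp (-(s * T))) + -log (1 - m2 * exp (-(s * T))) :=
    (((LinearMap.mul ℝ ℝ s).convexOn (convex_Ioi _)).add
      (hfactor m1 hm1 (le_max_left _ _))).add (hfactor m2 hm2 (le_max_right _ _))
  refine (hlog.exp.smul (by positivity : 0 ≤ exp (-s * d) * (m1 * m2))).congr fun T hT => ?_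
  have h1 : m1 < exp (s * T) := hlt m1 hm1 (le_max_left _ _) T hT
  have h2 : m2 < exp (s * T) := hlt m2 hm2 (le_max_right _ _) T hT
  have hcube : exp (3 * s * T) = exp (s * T) ^ 3 := by rw [← exp_nat_mul]; ring_nf
  simp only [smul_eq_mul, exp_add, exp_neg_log_one_sub_mul_exp_neg h1,
    exp_neg_log_one_sub_mul_exp_neg h2, hcube]
  field_simp [(sub_pos.2 h1).ne', (sub_pos.2 h2).ne']
end
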